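/- Löwdin symmetric orthogonalisation: let N ≥ 2 and let w, x ∈ ℂ^N be unit vectors (with respect to the standard Hermitian inner product ⟨u,v⟩ = Σᵢ conj(uᵢ)vᵢ) such that k := ⟨w, x⟩ satisfies |k| < 1. Let (w′ x′) be the N×2 matrix product (w x) · M_k⁻¹, i.e. w′ and x′ are the columns of the product of the N×2 matrix with columns w, x by M_k⁻¹. Then w′ and x′ are orthonormal: ‖w′‖ = ‖x′‖ = 1 and ⟨w′, x′⟩ = 0. -/

import Mathlib

open Matrix

/-- `R = (1+|k|)^{1/2} + (1−|k|)^{1/2}`. -/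
noncomputable def lowdinR (k : ℂ) : ℝ :=
  Real.sqrt (1 + ‖k‖) + Real.sqrt (1 - ‖k‖)

/-- `M_k = R⁻¹ · [[R²/2, k], [conj k, R²/2]]`. -/
noncomputable def lowdinM (k : ℂ) : Matrix (Fin 2) (Fin 2) ℂ :=
  ((lowdinR k : ℂ))⁻¹ •
    !![((lowdinR k ^ 2 / 2 : ℝ) : ℂ), k;
       (starRingEnd ℂ) k, ((lowdinR k ^ 2 / 2 : ℝ) : ℂ)]

set_option maxHeartbeats 1600000 in
/-- **Löwdin symmetric orthogonalisation.**
Let `N ≥ 2` and let `w, x ∈ ℂ^N` be unit vectors such that `k := ⟨w, x⟩` satisfies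
`|k| < 1`.  Let `w′, x′` be the columns of the `N×2` matrix `(w x) · M_k⁻¹`, i.e.
`w′ = (M_k⁻¹)₀₀ • w + (M_k⁻¹)₁₀ • x` and `x′ = (M_k⁻¹)₀₁ • w + (M_k⁻¹)₁₁ • x`.
Then `w′` and `x′` are orthonormal: `‖w′‖ = ‖x′‖ = 1` and `⟨w′, x′⟩ = 0`. -/
theorem lowdin_orthogonalisation (N : ℕ) (hN : 2 ≤ N)
    (w x : EuclideanSpace ℂ (Fin N)) (hw : ‖w‖ = 1) (hx : ‖x‖ = 1)
    (k : ℂ) (hk : k = (inner ℂ w x : ℂ)) (hk1 : ‖k‖ < 1) :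
    ‖(lowdinM k)⁻¹ 0 0 • w + (lowdinM k)⁻¹ 1 0 • x‖ = 1 ∧
    ‖(lowdinM k)⁻¹ 0 1 • w + (lowdinM k)⁻¹ 1 1 • x‖ = 1 ∧
    (inner ℂ ((lowdinM k)⁻¹ 0 0 • w + (lowdinM k)⁻¹ 1 0 • x)
        ((lowdinM k)⁻¹ 0 1 • w + (lowdinM k)⁻¹ 1 1 • x) : ℂ) = 0 := by
  -- real-number facts
  set a := ‖k‖ with ha
  have ha0 : 0 ≤ a := norm_nonneg k
  set R := lowdinR k with hR
  have hR2 : R ^ 2 = 2 + 2 * Real.sqrt (1 - a^2) := by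
    rw [hR, lowdinR]
    have h1 : Real.sqrt (1+a) ^ 2 = 1 + a := Real.sq_sqrt (by linarith)
    have h2 : Real.sqrt (1-a) ^ 2 = 1 - a := Real.sq_sqrt (by linarith)
    have h3 : Real.sqrt (1+a) * Real.sqrt (1-a) = Real.sqrt (1 - a^2) := by
      rw [← Real.sqrt_mul (by linarith)]; ring_nf
    nlinarith [h1, h2, h3]
  set c := R ^ 2 / 2 with hc
  have hs : Real.sqrt (1 - a^2) ^ 2 = 1 - a^2 := Real.sq_sqrt (by nlinarith)
  set a2 := a ^ 2 with ha2
  have hkey : c ^ 2 + a2 = 2 * c := by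
    rw [hc, hR2, ha2]; nlinarith [hs]
  have hc1 : 1 ≤ c := by
    rw [hc, hR2]; nlinarith [Real.sqrt_nonneg (1 - a^2)]
  have hRnn : 0 ≤ R := add_nonneg (Real.sqrt_nonneg _) (Real.sqrt_nonneg _)
  have hRpos : 0 < R := by nlinarith [hc1]
  set D := c ^ 2 - a2 with hD
  have hDpos : 0 < D := by nlinarith
  have hR0 : (R : ℂ) ≠ 0 := by exact_mod_cast hRpos.ne'
  have hD0 : (D : ℂ) ≠ 0 := by exact_mod_cast hDpos.ne'
  have hkk : k * (starRingEnd ℂ) k = (a2 : ℂ) := by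
    rw [Complex.mul_conj, ha2, ha]; norm_cast; rw [Complex.sq_norm]
  have hDC : (D : ℂ) = (c:ℂ)^2 - (a2:ℂ) := by rw [hD]; push_cast; ring
  have hkeyC : (c:ℂ) ^ 2 + (a2:ℂ) = 2 * (c:ℂ) := by exact_mod_cast hkey
  have hRC : (R:ℂ) ^ 2 = 2 * (c:ℂ) := by
    have : R ^ 2 = 2 * c := by rw [hc]; ring
    exact_mod_cast this
  -- the explicit inverse
  have hinv : (lowdinM k)⁻¹ =
      !![(R*c/D : ℂ), -(R : ℂ)*k/D; -(R:ℂ)*(starRingEnd ℂ) k/D, (R*c/D : ℂ)] := by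
    apply Matrix.inv_eq_right_inv
    rw [lowdinM, ← hR, smul_mul_assoc, Matrix.mul_fin_two, Matrix.one_fin_two]
    have hcc : ((R^2/2 : ℝ) : ℂ) = (c : ℂ) := by rw [hc]
    rw [hcc]
    ext i j
    fin_cases i <;> fin_cases j
    all_goals simp only [Matrix.smul_apply, smul_eq_mul, Matrix.cons_val', Matrix.cons_val_zero,
        Matrix.cons_val_one, Matrix.head_cons, Matrix.empty_val', Matrix.cons_val_fin_one,
        Matrix.head_fin_const, Matrix.of_apply, Fin.zero_eta, Fin.mk_one]
    all_goals field_simp [hR0, hD0]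
    · linear_combination -hkk - hDC
    · ring
    · ring
    · linear_combination -hkk - hDC
  rw [hinv]
  simp only [Matrix.cons_val', Matrix.cons_val_zero, Matrix.cons_val_one, Matrix.head_cons,
    Matrix.empty_val', Matrix.cons_val_fin_one, Matrix.head_fin_const, Matrix.of_apply]
  -- inner products of the original vectors
  have hww : (inner ℂ w w : ℂ) = 1 := by
    rw [inner_self_eq_norm_sq_to_K, hw]; norm_num
  have hxx : (inner ℂ x x : ℂ) = 1 := by
    rw [inner_self_eq_norm_sq_to_K, hx]; norm_num
  have hwx : (inner ℂ w x : ℂ) = k := hk.symm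
  have hxw : (inner ℂ x w : ℂ) = (starRingEnd ℂ) k := by
    rw [← inner_conj_symm, hwx]
  set p : ℂ := (R*c/D : ℂ) with hp
  set q : ℂ := -(R:ℂ)*(starRingEnd ℂ) k/D with hq
  set r : ℂ := -(R:ℂ)*k/D with hr
  have expand : ∀ (α β γ δ : ℂ),
      (inner ℂ (α • w + β • x) (γ • w + δ • x) : ℂ) =
        (starRingEnd ℂ) α * γ + (starRingEnd ℂ) α * δ * k +
        (starRingEnd ℂ) β * γ * (starRingEnd ℂ) k + (starRingEnd ℂ) β * δ := by
    intro α β γ δ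
    simp only [inner_add_left, inner_add_right, inner_smul_left, inner_smul_right,
      hww, hxx, hwx, hxw]
    ring
  have hcp : (starRingEnd ℂ) p = p := by
    rw [hp]; simp [map_div₀]
  have hcq : (starRingEnd ℂ) q = r := by
    rw [hq, hr]; simp [map_div₀]
  have hcr : (starRingEnd ℂ) r = q := by
    rw [hq, hr]; simp [map_div₀]
  have h1 : (inner ℂ (p • w + q • x) (p • w + q • x) : ℂ) = 1 := by
    rw [expand, hcp, hcq]
    rw [hp, hr, hq]
    field_simp
    linear_combination ((R:ℂ)^2 - 2*(R:ℂ)^2*(c:ℂ)) * hkk + ((a2:ℂ) - (D:ℂ) - (c:ℂ)^2) * hDC +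
      ((a2:ℂ) - 2*(c:ℂ)*(a2:ℂ) + (c:ℂ)^2) * hRC + (-(a2:ℂ) - (c:ℂ)^2) * hkeyC
  have h2 : (inner ℂ (r • w + p • x) (r • w + p • x) : ℂ) = 1 := by
    rw [expand, hcp, hcr]
    rw [hp, hr, hq]
    field_simp
    linear_combination ((R:ℂ)^2 - 2*(R:ℂ)^2*(c:ℂ)) * hkk + ((a2:ℂ) - (D:ℂ) - (c:ℂ)^2) * hDC +
      ((a2:ℂ) - 2*(c:ℂ)*(a2:ℂ) + (c:ℂ)^2) * hRC + (-(a2:ℂ) - (c:ℂ)^2) * hkeyC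
  have h3 : (inner ℂ (p • w + q • x) (r • w + p • x) : ℂ) = 0 := by
    rw [expand, hcp, hcq]
    rw [hp, hr]
    field_simp
    linear_combination ((R:ℂ)^2 * k) * hkk + ((R:ℂ)^2 * k) * hkeyC
  have norm1 : ∀ v : EuclideanSpace ℂ (Fin N), (inner ℂ v v : ℂ) = 1 → ‖v‖ = 1 := by
    intro v hv
    have h' : ‖v‖^2 = 1 := by
      rw [← inner_self_eq_norm_sq (𝕜 := ℂ), hv]
      simp
    nlinarith [norm_nonneg v]
  exact ⟨norm1 _ h1, norm1 _ h2, h3⟩
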